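/- arXiv:1704.05651 — 2 statements merged into one kernel-verified Lean document; each statement's English description precedes it below -/
import Mathlib

section
/- Suppose u ∈ C²(Ω) is harmonic on the open upper half ball B₁⁺ = {x ∈ ℝⁿ : |x| < 1, xₙ > 0}, continuous on its closure, u ≥ 0, and u vanishes on the flat part {xₙ = 0, |x| < 1}. If u(x₀) > 0 for some x₀ ∈ B₁⁺, then for every x in the closed half ball of radius 1/2 one has u(x) ≥ c·xₙ for some constant c > 0 (depending on u). -/
/-!
Hopf's barrier argument. When `2αρ² > n`, the Gaussian `exp (-α |z - y|²)` is strictly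
subharmonic on the annulus `ρ < |z - y| < R`, so a rescaled Gaussian minus a
superharmonic `u` attains its maximum over the closed annulus on the two boundary spheres. Hence
`u` dominates the barrier, which vanishes linearly at the outer sphere. Centred at points close
to a given one, the same comparison shows that `{u > 0}` is relatively closed in the connected
half ball, so `u > 0` there and `u ≥ ε > 0` on a compact set away from `{xₙ = 0}`. Finally a point
`x` with small `xₙ` lies at distance `xₙ` from the boundary of the ball of radius `1/8` tangent
to `{xₙ = 0}` right below `x`, and the inner sphere of that annulus lies in the compact set.
-/

open scoped BigOperators

variable {n : ℕ}

noncomputable def lap (u : EuclideanSpace ℝ (Fin n) → ℝ)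
    (x : EuclideanSpace ℝ (Fin n)) : ℝ :=
  ∑ i, fderiv ℝ (fun y => fderiv ℝ u y (EuclideanSpace.single i 1)) x (EuclideanSpace.single i 1)

open Real Set Filter Topology Metric
open scoped RealInnerProductSpace

theorem IsLocalMax.deriv_deriv_nonpos {g : ℝ → ℝ} {a : ℝ} (h : IsLocalMax g a)
    (hc : ContinuousAt g a) : deriv (deriv g) a ≤ 0 := by
  by_contra! hpos
  have hmin := isLocalMin_of_deriv_deriv_pos hpos h.deriv_eq_zero hc
  have hconst : g =ᶠ[𝓝 a] fun _ => g a := by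
    filter_upwards [h, hmin] with t hle hge using le_antisymm hle hge
  rw [hconst.deriv.deriv_eq, deriv_const', deriv_const] at hpos
  exact hpos.false

section SecondDirectionalDerivative

variable {F : Type*} [NormedAddCommGroup F] [NormedSpace ℝ F] {f g : F → ℝ} {p : F}

theorem ContDiffAt.differentiableAt_fderiv_apply (hf : ContDiffAt ℝ 2 f p) (e : F) :
    DifferentiableAt ℝ (fun w => fderiv ℝ f w e) p :=
  ((hf.fderiv_right (m := 1) le_rfl).differentiableAt one_ne_zero).clm_apply
    (differentiableAt_const e)

theorem fderiv_fderiv_apply_sub (hf : ContDiffAt ℝ 2 f p) (hg : ContDiffAt ℝ 2 g p) (e : F) :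
    fderiv ℝ (fun w => fderiv ℝ (fun x => f x - g x) w e) p e =
      fderiv ℝ (fun w => fderiv ℝ f w e) p e - fderiv ℝ (fun w => fderiv ℝ g w e) p e := by
  have hsub : (fun w => fderiv ℝ (fun x => f x - g x) w e)
      =ᶠ[𝓝 p] fun w => fderiv ℝ f w e - fderiv ℝ g w e := by
    filter_upwards [hf.eventually (by simp), hg.eventually (by simp)] with w hfw hgw
    rw [fderiv_fun_sub (hfw.differentiableAt two_ne_zero) (hgw.differentiableAt two_ne_zero)]
    rfl
  rw [hsub.fderiv_eq, fderiv_fun_sub (hf.differentiableAt_fderiv_apply e)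
    (hg.differentiableAt_fderiv_apply e)]
  rfl

theorem deriv_deriv_comp_add_smul (hf : ContDiffAt ℝ 2 f p) (e : F) :
    deriv (deriv fun t : ℝ => f (p + t • e)) 0 =
      fderiv ℝ (fun w => fderiv ℝ f w e) p e := by
  have hline : ∀ t : ℝ, HasDerivAt (fun s : ℝ => p + s • e) e t := fun t => by
    simpa using ((hasDerivAt_id t).smul_const e).const_add p
  have hderiv :
      deriv (fun t : ℝ => f (p + t • e)) =ᶠ[𝓝 0] fun t => fderiv ℝ f (p + t • e) e := by
    have hnear : Tendsto (fun t : ℝ => p + t • e) (𝓝 0) (𝓝 p) := by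
      simpa using (hline 0).continuousAt.tendsto
    filter_upwards [hnear.eventually (hf.eventually (by simp))] with t ht
    exact ((ht.differentiableAt two_ne_zero).hasFDerivAt.comp_hasDerivAt t (hline t)).deriv
  have hp : HasFDerivAt (fun w => fderiv ℝ f w e)
      (fderiv ℝ (fun w => fderiv ℝ f w e) p) (p + (0 : ℝ) • e) := by
    simpa using (hf.differentiableAt_fderiv_apply e).hasFDerivAt
  rw [hderiv.deriv_eq]
  exact (hp.comp_hasDerivAt 0 (hline 0)).deriv

theorem IsLocalMax.fderiv_fderiv_apply_nonpos (h : IsLocalMax f p) (hf : ContDiffAt ℝ 2 f p)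
    (e : F) : fderiv ℝ (fun w => fderiv ℝ f w e) p e ≤ 0 := by
  have hline : Continuous fun t : ℝ => p + t • e := by fun_prop
  have hp : p + (0 : ℝ) • e = p := by simp
  rw [← deriv_deriv_comp_add_smul hf e]
  refine IsLocalMax.deriv_deriv_nonpos ?_ ?_
  · exact IsLocalMax.comp_continuous (g := fun t : ℝ => p + t • e) (by rwa [hp])
      hline.continuousAt
  · exact ContinuousAt.comp (g := f) (by rw [hp]; exact hf.continuousAt) hline.continuousAt

end SecondDirectionalDerivative

section Gaussian

variable {F : Type*} [NormedAddCommGroup F] [InnerProductSpace ℝ F] (a b α : ℝ) (y : F)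

theorem hasFDerivAt_gaussian (w : F) :
    HasFDerivAt (fun z => exp (-α * ‖z - y‖ ^ 2))
      ((-2 * α * exp (-α * ‖w - y‖ ^ 2)) • innerSL ℝ (w - y)) w := by
  refine (((hasFDerivAt_id w).sub_const y).norm_sq.const_mul (-α)).exp.congr_fderiv ?_
  ext e
  simp
  ring

theorem fderiv_gaussian_apply (w e : F) :
    fderiv ℝ (fun z => a * exp (-α * ‖z - y‖ ^ 2) + b) w e
      = -2 * α * a * ⟪w - y, e⟫ * exp (-α * ‖w - y‖ ^ 2) := by
  rw [(((hasFDerivAt_gaussian α y w).const_mul a).add_const b).fderiv]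
  simp [inner_sub_left]
  ring

theorem fderiv_fderiv_gaussian_apply (z e : F) :
    fderiv ℝ (fun w => fderiv ℝ (fun z => a * exp (-α * ‖z - y‖ ^ 2) + b) w e) z e
      = a * (4 * α ^ 2 * ⟪z - y, e⟫ ^ 2 - 2 * α * ‖e‖ ^ 2) * exp (-α * ‖z - y‖ ^ 2) := by
  simp_rw [fderiv_gaussian_apply]
  have hinner :
      HasFDerivAt (fun w => -2 * α * a * ⟪w - y, e⟫) ((-2 * α * a) • innerSL ℝ e) z := by
    refine (((innerSL ℝ e).hasFDerivAt.comp z ((hasFDerivAt_id z).sub_const y)).const_mul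
      (-2 * α * a)).congr_of_eventuallyEq ?_ |>.congr_fderiv ?_
    · exact Eventually.of_forall fun w => by simp [real_inner_comm]
    · ext w; simp
  rw [(hinner.fun_mul (hasFDerivAt_gaussian α y z)).fderiv]
  simp [real_inner_comm e, inner_sub_right]
  ring

theorem contDiff_gaussian {k : WithTop ℕ∞} :
    ContDiff ℝ k fun z : F => a * exp (-α * ‖z - y‖ ^ 2) + b := by
  have hsq : ContDiff ℝ k fun z : F => ‖z - y‖ ^ 2 :=
    (contDiff_norm_sq ℝ).comp (contDiff_id.sub contDiff_const)
  fun_prop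

end Gaussian

local notation "E" => EuclideanSpace ℝ (Fin n)

theorem lap_sub {f g : E → ℝ} {p : E} (hf : ContDiffAt ℝ 2 f p) (hg : ContDiffAt ℝ 2 g p) :
    lap (fun x => f x - g x) p = lap f p - lap g p := by
  simp only [lap, fderiv_fderiv_apply_sub hf hg, Finset.sum_sub_distrib]

theorem IsLocalMax.lap_nonpos {f : E → ℝ} {p : E} (h : IsLocalMax f p)
    (hf : ContDiffAt ℝ 2 f p) : lap f p ≤ 0 :=
  Finset.sum_nonpos fun _ _ => h.fderiv_fderiv_apply_nonpos hf _

theorem lap_gaussian (a b α : ℝ) (y z : E) :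
    lap (fun z => a * exp (-α * ‖z - y‖ ^ 2) + b) z
      = a * (4 * α ^ 2 * ‖z - y‖ ^ 2 - 2 * α * n) * exp (-α * ‖z - y‖ ^ 2) := by
  simp only [lap, fderiv_fderiv_gaussian_apply, EuclideanSpace.inner_single_right]
  simp only [one_mul, conj_trivial, PiLp.norm_single, norm_one, one_pow, mul_one]
  rw [← Finset.sum_mul, ← Finset.mul_sum, Finset.sum_sub_distrib, ← Finset.mul_sum,
    EuclideanSpace.norm_sq_eq]
  simp only [PiLp.sub_apply, Real.norm_eq_abs, sq_abs, Finset.sum_const, Finset.card_univ,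
    Fintype.card_fin, nsmul_eq_mul]
  ring

theorem lap_gaussian_sub_pos {u : E → ℝ} {x y : E} {a b α : ℝ} (ha : 0 < a)
    (hx : (n : ℝ) < 2 * α * ‖x - y‖ ^ 2) (hu : ContDiffAt ℝ 2 u x) (hsup : lap u x ≤ 0) :
    0 < lap (fun w => a * exp (-α * ‖w - y‖ ^ 2) + b - u w) x := by
  have hα : 0 < α := by nlinarith [n.cast_nonneg (α := ℝ), sq_nonneg ‖x - y‖]
  have hcoef : 0 < 4 * α ^ 2 * ‖x - y‖ ^ 2 - 2 * α * n := by
    nlinarith [mul_lt_mul_of_pos_left hx hα]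
  rw [lap_sub (contDiff_gaussian a b α y).contDiffAt hu, lap_gaussian]
  nlinarith [mul_pos (mul_pos ha hcoef) (exp_pos (-α * ‖x - y‖ ^ 2))]

theorem nonpos_of_lap_pos {v : E → ℝ} {A K : Set E} (hA : IsOpen A) (hAK : A ⊆ K)
    (hK : IsCompact K) (hv : ContDiffOn ℝ 2 v A) (hvK : ContinuousOn v K)
    (hlap : ∀ x ∈ A, 0 < lap v x) (hbdry : ∀ x ∈ K \ A, v x ≤ 0) {x : E} (hx : x ∈ K) :
    v x ≤ 0 := by
  obtain ⟨p, hpK, hmax⟩ := hK.exists_isMaxOn ⟨x, hx⟩ hvK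
  refine (hmax hx).trans ?_
  by_cases hpA : p ∈ A
  · have hloc : IsLocalMax v p :=
      Filter.mem_of_superset (hA.mem_nhds hpA) fun z hz => hmax (hAK hz)
    exact absurd (hloc.lap_nonpos (hv.contDiffAt (hA.mem_nhds hpA))) (hlap p hpA).not_ge
  · exact hbdry p ⟨hpK, hpA⟩

theorem exp_neg_mul_sq_sub_pos {α r s : ℝ} (hα : 0 < α) (hr : 0 ≤ r) (hrs : r < s) :
    0 < exp (-α * r ^ 2) - exp (-α * s ^ 2) :=
  sub_pos.2 <| exp_lt_exp.2 <| by nlinarith [pow_lt_pow_left₀ hrs hr two_ne_zero]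

theorem dist_eq_or_dist_eq_of_mem_closedAnnulus {x y : E} {ρ R : ℝ}
    (hx : x ∈ (closedBall y R \ ball y ρ) \ (ball y R \ closedBall y ρ)) :
    dist x y = ρ ∨ dist x y = R := by
  simp only [Set.mem_sdiff, mem_closedBall, mem_ball, not_lt, not_and, not_le] at hx
  obtain ⟨⟨hR, hρ⟩, h⟩ := hx
  rcases hR.lt_or_eq with hR | hR
  · exact .inl (le_antisymm (h hR) hρ)
  · exact .inr hR

theorem mul_exp_sub_le_of_annulus {u : E → ℝ} {y : E} {ρ R α m : ℝ} (hρ : 0 < ρ)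
    (hρR : ρ < R) (hα : (n : ℝ) < 2 * α * ρ ^ 2) (hm : 0 < m)
    (hu : ContDiffOn ℝ 2 u (ball y R \ closedBall y ρ))
    (hsup : ∀ z ∈ ball y R \ closedBall y ρ, lap u z ≤ 0)
    (hcont : ContinuousOn u (closedBall y R \ ball y ρ))
    (hinner : ∀ z, dist z y = ρ → m ≤ u z) (houter : ∀ z, dist z y = R → 0 ≤ u z)
    {z : E} (hz : z ∈ closedBall y R \ ball y ρ) :
    m * (exp (-α * dist z y ^ 2) - exp (-α * R ^ 2))
      ≤ (exp (-α * ρ ^ 2) - exp (-α * R ^ 2)) * u z := by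
  have hα0 : 0 < α := by nlinarith [n.cast_nonneg (α := ℝ), sq_nonneg ρ]
  set C := exp (-α * ρ ^ 2) - exp (-α * R ^ 2) with hC_def
  have hC : 0 < C := exp_neg_mul_sq_sub_pos hα0 hρ.le hρR
  clear_value C
  have hmC : m / C * C = m := div_mul_cancel₀ m hC.ne'
  have hA : IsOpen (ball y R \ closedBall y ρ) := isOpen_ball.sdiff isClosed_closedBall
  have hbarrier := contDiff_gaussian (k := 2) (m / C) (-(m / C * exp (-α * R ^ 2))) α y
  -- the barrier is `m` on the inner sphere and `0` on the outer one
  have hv : m / C * exp (-α * ‖z - y‖ ^ 2) + -(m / C * exp (-α * R ^ 2)) - u z ≤ 0 := by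
    refine nonpos_of_lap_pos
      (v := fun w => m / C * exp (-α * ‖w - y‖ ^ 2) + -(m / C * exp (-α * R ^ 2)) - u w) hA
      (sdiff_subset_sdiff ball_subset_closedBall ball_subset_closedBall)
      ((isCompact_closedBall y R).diff isOpen_ball) (hbarrier.contDiffOn.sub hu)
      (hbarrier.continuous.continuousOn.sub hcont) (fun x hx => ?_) (fun x hx => ?_) hz
    · have hxy : ρ < ‖x - y‖ := by simpa [dist_eq_norm] using hx.2
      refine lap_gaussian_sub_pos (div_pos hm hC) ?_ (hu.contDiffAt (hA.mem_nhds hx)) (hsup x hx)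
      exact hα.trans (by nlinarith [pow_lt_pow_left₀ hxy hρ.le two_ne_zero])
    · rcases dist_eq_or_dist_eq_of_mem_closedAnnulus hx with h | h
      · rw [← dist_eq_norm, h]
        linear_combination hinner x h + hmC - m / C * hC_def
      · rw [← dist_eq_norm, h]
        linarith [houter x h]
  rw [← dist_eq_norm] at hv
  linear_combination mul_le_mul_of_nonneg_left hv hC.le
    - (exp (-α * dist z y ^ 2) - exp (-α * R ^ 2)) * hmC

theorem exp_neg_mul_sq_sub_ge {α R t : ℝ} (hα : 0 < α) (ht : 0 ≤ t) (htR : t ≤ R) :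
    α * R * exp (-α * R ^ 2) * t ≤ exp (-α * (R - t) ^ 2) - exp (-α * R ^ 2) := by
  have hsplit : exp (-α * (R - t) ^ 2) = exp (-α * R ^ 2) * exp (α * t * (2 * R - t)) := by
    rw [← exp_add]; ring_nf
  have hlin := add_one_le_exp (α * t * (2 * R - t))
  have hquad : α * t * R ≤ α * t * (2 * R - t) :=
    mul_le_mul_of_nonneg_left (by linarith) (by positivity)
  rw [hsplit]
  nlinarith [exp_pos (-α * R ^ 2)]

theorem exists_pos_mul_le_of_annulus {R : ℝ} (hR : 0 < R) :
    ∃ c > 0, ∀ (u : E → ℝ) (y : E) (m : ℝ), 0 < m →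
      ContDiffOn ℝ 2 u (ball y R \ closedBall y (R / 2)) →
      (∀ z ∈ ball y R \ closedBall y (R / 2), lap u z ≤ 0) →
      ContinuousOn u (closedBall y R \ ball y (R / 2)) →
      (∀ z, dist z y = R / 2 → m ≤ u z) → (∀ z, dist z y = R → 0 ≤ u z) →
      ∀ z ∈ closedBall y R \ ball y (R / 2), c * m * (R - dist z y) ≤ u z := by
  set α : ℝ := 2 * (n + 1) / R ^ 2
  have hα : (n : ℝ) < 2 * α * (R / 2) ^ 2 := by
    have : 2 * α * (R / 2) ^ 2 = n + 1 := by simp only [α]; field_simp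
    linarith
  have hα0 : 0 < α := by positivity
  set C := exp (-α * (R / 2) ^ 2) - exp (-α * R ^ 2)
  have hC : 0 < C := exp_neg_mul_sq_sub_pos hα0 (by positivity) (by linarith)
  refine ⟨α * R * exp (-α * R ^ 2) / C, by positivity,
    fun u y m hm hu hsup hcont hinner houter z hz => ?_⟩
  have hzR : dist z y ≤ R := hz.1
  have hzR2 : R / 2 ≤ dist z y := not_lt.1 hz.2
  have hcomp := mul_exp_sub_le_of_annulus (α := α) (by positivity) (by linarith) hα hm hu hsup
    hcont hinner houter hz
  have hslope := exp_neg_mul_sq_sub_ge (R := R) hα0 (sub_nonneg.2 hzR) (by linarith)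
  rw [sub_sub_cancel] at hslope
  calc α * R * exp (-α * R ^ 2) / C * m * (R - dist z y)
      = m * (α * R * exp (-α * R ^ 2) * (R - dist z y)) / C := by ring
    _ ≤ m * (exp (-α * dist z y ^ 2) - exp (-α * R ^ 2)) / C := by gcongr
    _ ≤ u z := by rw [div_le_iff₀ hC]; linarith

theorem pos_of_mem_closure_pos {D : Set E} (hD : IsOpen D) {u : E → ℝ}
    (hu : ContDiffOn ℝ 2 u D) (hsup : ∀ x ∈ D, lap u x ≤ 0) (hnonneg : ∀ x ∈ D, 0 ≤ u x)
    {x : E} (hx : x ∈ D) (hxU : x ∈ closure (D ∩ u ⁻¹' Ioi 0)) : 0 < u x := by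
  obtain ⟨r, hr, hrD⟩ := Metric.isOpen_iff.1 hD x hx
  obtain ⟨p, ⟨hpD, hpu⟩, hxp⟩ := Metric.mem_closure_iff.1 hxU (r / 4) (by positivity)
  rcases eq_or_ne x p with rfl | hne
  · exact hpu
  have hball : closedBall p (r / 2) ⊆ D := fun z hz =>
    hrD (by rw [mem_ball]; linarith [dist_triangle z p x, mem_closedBall.1 hz, dist_comm x p])
  obtain ⟨δ₀, hδ₀, hnear⟩ := Metric.eventually_nhds_iff.1 <|
    (hu.continuousOn.continuousAt (hD.mem_nhds hpD)).eventually
      (eventually_gt_nhds (half_lt_self hpu))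
  set δ := min (δ₀ / 2) (dist x p / 2)
  have hxp0 : 0 < dist x p := dist_pos.2 hne
  have hδ : 0 < δ := by positivity
  have hδ₀' : δ < δ₀ := (min_le_left _ _).trans_lt (by linarith)
  have hδx : δ < dist x p := (min_le_right _ _).trans_lt (by linarith)
  set α : ℝ := (n + 1) / δ ^ 2
  have hα : (n : ℝ) < 2 * α * δ ^ 2 := by
    have : 2 * α * δ ^ 2 = 2 * (n + 1) := by simp only [α]; field_simp
    linarith
  have hα0 : 0 < α := by positivity
  have hcomp := mul_exp_sub_le_of_annulus (u := u) (y := p) (R := r / 2) hδ (by linarith) hα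
    (half_pos hpu) (hu.mono (sdiff_subset.trans (ball_subset_closedBall.trans hball)))
    (fun z hz => hsup z (hball (ball_subset_closedBall hz.1)))
    (hu.continuousOn.mono (sdiff_subset.trans hball)) (fun z hz => (hnear (by linarith)).le)
    (fun z hz => hnonneg z (hball hz.le)) (z := x)
    ⟨by rw [mem_closedBall]; linarith, by rw [mem_ball]; linarith⟩
  have hnum := exp_neg_mul_sq_sub_pos hα0 dist_nonneg (show dist x p < r / 2 by linarith)
  have hden := exp_neg_mul_sq_sub_pos hα0 hδ.le (show δ < r / 2 by linarith)
  exact pos_of_mul_pos_right ((mul_pos (half_pos hpu) hnum).trans_le hcomp) hden.le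

theorem IsPreconnected.pos_of_lap_nonpos {D : Set E} (hDc : IsPreconnected D) (hD : IsOpen D)
    {u : E → ℝ} (hu : ContDiffOn ℝ 2 u D) (hsup : ∀ x ∈ D, lap u x ≤ 0)
    (hnonneg : ∀ x ∈ D, 0 ≤ u x) {x₀ : E} (hx₀ : x₀ ∈ D) (hpos : 0 < u x₀) :
    ∀ x ∈ D, 0 < u x := by
  have hU : IsOpen (D ∩ u ⁻¹' Ioi 0) := hu.continuousOn.isOpen_inter_preimage hD isOpen_Ioi
  have hsub := hDc.subset_of_closure_inter_subset hU ⟨x₀, hx₀, hx₀, hpos⟩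
    fun x hx => ⟨hx.2, pos_of_mem_closure_pos hD hu hsup hnonneg hx.2 hx.1⟩
  exact fun x hx => (hsub hx).2

def upperHalfBall (j : Fin n) : Set E := {x | ‖x‖ < 1 ∧ 0 < x j}

theorem isOpen_upperHalfBall (j : Fin n) : IsOpen (upperHalfBall j) :=
  (isOpen_lt continuous_norm continuous_const).inter
    (isOpen_lt continuous_const (EuclideanSpace.proj j).continuous)

theorem isPreconnected_upperHalfBall (j : Fin n) : IsPreconnected (upperHalfBall j) := by
  have hset : upperHalfBall j = ball (0 : E) 1 ∩ {x | 0 < x j} := by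
    ext x; simp [upperHalfBall]
  rw [hset]
  exact ((convex_ball 0 1).inter
    (convex_halfSpace_gt (EuclideanSpace.proj j).toLinearMap.isLinear 0)).isPreconnected

theorem mem_closure_upperHalfBall {j : Fin n} {x : E} (hx : ‖x‖ < 1) (hxj : 0 ≤ x j) :
    x ∈ closure (upperHalfBall j) := by
  set e : E := EuclideanSpace.single j 1
  have hcont : Continuous fun t : ℝ => x + t • e := by fun_prop
  have hlim : Tendsto (fun t : ℝ => x + t • e) (𝓝[>] 0) (𝓝 x) := by
    simpa using (hcont.tendsto 0).mono_left nhdsWithin_le_nhds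
  refine mem_closure_of_tendsto hlim ?_
  filter_upwards [Ioo_mem_nhdsGT (sub_pos.2 hx)] with t ht
  refine ⟨?_, by simp [e]; linarith [ht.1]⟩
  calc ‖x + t • e‖ ≤ ‖x‖ + ‖t • e‖ := norm_add_le _ _
    _ = ‖x‖ + t := by simp [e, norm_smul, abs_of_pos ht.1]
    _ < 1 := by linarith [ht.2]

theorem sub_dist_le_apply (z y : E) (j : Fin n) : y j - dist z y ≤ z j := by
  have h := PiLp.dist_apply_le z y j
  rw [Real.dist_eq] at h
  linarith [neg_abs_le (z j - y j)]

theorem exists_pos_mul_le_near_flat_boundary {j : Fin n} {u : E → ℝ}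
    (hu : ContDiffOn ℝ 2 u (upperHalfBall j)) (hsup : ∀ x ∈ upperHalfBall j, lap u x ≤ 0)
    (hcont : ContinuousOn u (closure (upperHalfBall j)))
    (hnonneg : ∀ x ∈ closure (upperHalfBall j), 0 ≤ u x) {ε : ℝ} (hε : 0 < ε)
    (hK : ∀ z ∈ closedBall (0 : E) (3 / 4) ∩ {z | 1 / 16 ≤ z j}, ε ≤ u z) :
    ∃ c > 0, ∀ x : E, ‖x‖ ≤ 1 / 2 → 0 ≤ x j → x j ≤ 1 / 16 → c * x j ≤ u x := by
  obtain ⟨c, hc, hhopf⟩ := exists_pos_mul_le_of_annulus (n := n) (R := 1 / 8) (by norm_num)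
  refine ⟨c * ε, by positivity, fun x hx hxj hxj' => ?_⟩
  set y := x + (1 / 8 - x j) • EuclideanSpace.single j (1 : ℝ)
  have hyj : y j = 1 / 8 := by simp [y]
  have hshift : ‖(1 / 8 - x j) • EuclideanSpace.single j (1 : ℝ)‖ = 1 / 8 - x j := by
    rw [norm_smul, PiLp.norm_single, norm_one, mul_one, Real.norm_eq_abs,
      abs_of_nonneg (by linarith)]
  have hxy : dist x y = 1 / 8 - x j := by
    rw [dist_eq_norm, show x - y = -((1 / 8 - x j) • EuclideanSpace.single j (1 : ℝ)) by
      simp [y], norm_neg, hshift]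
  have hnorm : ∀ z, dist z y ≤ 1 / 8 → ‖z‖ ≤ 3 / 4 := fun z hz => by
    linarith [norm_le_norm_add_norm_sub' z y, dist_eq_norm z y, norm_add_le x
      ((1 / 8 - x j) • EuclideanSpace.single j (1 : ℝ))]
  have hcoord : ∀ z, 1 / 8 - dist z y ≤ z j := fun z => hyj ▸ sub_dist_le_apply z y j
  have hclosure : ∀ z, dist z y ≤ 1 / 8 → z ∈ closure (upperHalfBall j) := fun z hz =>
    mem_closure_upperHalfBall (by linarith [hnorm z hz]) (by linarith [hcoord z])
  have hball : ball y (1 / 8) ⊆ upperHalfBall j := fun z hz =>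
    ⟨by linarith [hnorm z (mem_ball.1 hz).le], by linarith [hcoord z, mem_ball.1 hz]⟩
  have hbound := hhopf u y ε hε (hu.mono (sdiff_subset.trans hball))
    (fun z hz => hsup z (hball hz.1)) (hcont.mono fun z hz => hclosure z hz.1)
    (fun z hz => hK z ⟨mem_closedBall_zero_iff.2 (hnorm z (by linarith)),
      show 1 / 16 ≤ z j by linarith [hcoord z]⟩)
    (fun z hz => hnonneg z (hclosure z hz.le)) x
    ⟨mem_closedBall.2 (by linarith), by rw [mem_ball]; linarith⟩
  rw [hxy, sub_sub_cancel] at hbound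
  linarith

/-- Hopf-type lower bound: a nonnegative harmonic function on the upper unit half-ball,
continuous up to the closure, vanishing on the flat boundary portion and positive somewhere,
is bounded below by a multiple of `xₙ` on the half-ball of radius `1/2`. -/
theorem stmt6 (hn : 2 ≤ n) (u : EuclideanSpace ℝ (Fin n) → ℝ)
    (B₁p : Set (EuclideanSpace ℝ (Fin n)))
    (hB : B₁p = {x | ‖x‖ < 1 ∧ 0 < x ⟨n - 1, by omega⟩})
    (hu2 : ContDiffOn ℝ 2 u B₁p)
    (hharm : ∀ x ∈ B₁p, lap u x = 0)
    (hcont : ContinuousOn u (closure B₁p))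
    (hnonneg : ∀ x ∈ closure B₁p, 0 ≤ u x)
    (x₀ : EuclideanSpace ℝ (Fin n)) (hx₀ : x₀ ∈ B₁p) (hpos : 0 < u x₀) :
    ∃ c > 0, ∀ x : EuclideanSpace ℝ (Fin n),
      ‖x‖ ≤ 1 / 2 → 0 ≤ x ⟨n - 1, by omega⟩ → c * x ⟨n - 1, by omega⟩ ≤ u x := by
  set j : Fin n := ⟨n - 1, by omega⟩
  change B₁p = upperHalfBall j at hB
  subst hB
  have hsup : ∀ x ∈ upperHalfBall j, lap u x ≤ 0 := fun x hx => (hharm x hx).le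
  have hupos := (isPreconnected_upperHalfBall j).pos_of_lap_nonpos (isOpen_upperHalfBall j) hu2
    hsup (fun x hx => hnonneg x (subset_closure hx)) hx₀ hpos
  set K : Set E := closedBall 0 (3 / 4) ∩ {z | 1 / 16 ≤ z j}
  have hKB : K ⊆ upperHalfBall j := fun z hz =>
    ⟨(mem_closedBall_zero_iff.1 hz.1).trans_lt (by norm_num), lt_of_lt_of_le (by norm_num) hz.2⟩
  have hK : IsCompact K := (isCompact_closedBall 0 _).inter_right
    (isClosed_le continuous_const (EuclideanSpace.proj j).continuous)
  obtain ⟨ε, hε, hεK⟩ := hK.exists_forall_le' (hcont.mono (hKB.trans subset_closure))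
    fun z hz => hupos z (hKB hz)
  obtain ⟨c, hc, hnear⟩ := exists_pos_mul_le_near_flat_boundary hu2 hsup hcont hnonneg hε hεK
  refine ⟨min ε c, lt_min hε hc, fun x hx hxj => ?_⟩
  rcases le_or_gt (1 / 16) (x j) with hfar | hclose
  · have hxj1 : x j ≤ 1 := (le_abs_self _).trans ((PiLp.norm_apply_le x j).trans (by linarith))
    calc min ε c * x j ≤ ε * 1 := mul_le_mul (min_le_left _ _) hxj1 hxj hε.le
      _ ≤ u x := by simpa using hεK x ⟨mem_closedBall_zero_iff.2 (by linarith), hfar⟩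
  · exact (mul_le_mul_of_nonneg_right (min_le_right _ _) hxj).trans (hnear x hx hxj hclose.le)
end

section
/- Let R > 0 and let u be continuous on the closure of ℝⁿ₊ \ B_R, superharmonic (−Δu ≥ 0 in the distributional sense) on ℝⁿ₊ \ cl(B_R), nonnegative, with u(x',0) = 0 for |x'| > R. If m := inf{u(y)/yₙ : y ∈ ∂B_R, yₙ > 0} is finite, then u(x) ≥ m·Rⁿ·xₙ/|x|ⁿ for all x ∈ ℝⁿ₊ with |x| ≥ R. -/
open scoped BigOperators

variable {n : ℕ}

/-!
The dipole `xₙ / |x|ⁿ` is harmonic away from the origin, equals `xₙ / Rⁿ` on `∂B_R`, vanishes on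
`{xₙ = 0}` and is at most `|x|^(1-n)`. Hence `w = u - m Rⁿ xₙ / |x|ⁿ` is superharmonic on
`{xₙ > 0, R < |x| < ρ}` and `w ≥ -m Rⁿ ρ^(1-n)` on the boundary of that region, so the weak minimum
principle gives the same bound inside; now let `ρ → ∞`. The minimum principle is proved by perturbing
`w` by `-ε |x|²`, whose Laplacian is strictly negative, so that an interior minimum is impossible.
-/

open Filter Topology InnerProductSpace Laplacian

theorem lap_eq_laplacian {u : EuclideanSpace ℝ (Fin n) → ℝ} {x : EuclideanSpace ℝ (Fin n)}
    (hu : ContDiffAt ℝ 2 u x) : lap u x = Δ u x := by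
  have hdiff : DifferentiableAt ℝ (fderiv ℝ u) x :=
    (hu.fderiv_right le_rfl).differentiableAt one_ne_zero
  rw [laplacian_eq_iteratedFDeriv_orthonormalBasis u (EuclideanSpace.basisFun (Fin n) ℝ)]
  refine Finset.sum_congr rfl fun i _ => ?_
  rw [fderiv_clm_apply hdiff (differentiableAt_const _), iteratedFDeriv_two_apply]
  simp

theorem lap_sub_const_mul {f g : EuclideanSpace ℝ (Fin n) → ℝ} {x : EuclideanSpace ℝ (Fin n)}
    (hf : ContDiffAt ℝ 2 f x) (hg : ContDiffAt ℝ 2 g x) (a : ℝ) :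
    lap (fun y => f y - a * g y) x = lap f x - a * lap g x := by
  have hag : ContDiffAt ℝ 2 (a • g) x := hg.const_smul a
  change lap (f - a • g) x = _
  rw [lap_eq_laplacian (u := f - a • g) (hf.sub hag), hf.laplacian_sub hag, laplacian_smul a hg,
    lap_eq_laplacian hf, lap_eq_laplacian hg]
  rfl

theorem lap_norm_sq (x : EuclideanSpace ℝ (Fin n)) : lap (fun y => ‖y‖ ^ 2) x = 2 * n := by
  have hpartial : ∀ i : Fin n,
      (fun y : EuclideanSpace ℝ (Fin n) => fderiv ℝ (fun y => ‖y‖ ^ 2) y (EuclideanSpace.single i 1))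
        = fun y => 2 * y i := by
    intro i; ext y; simp [fderiv_norm_sq_apply, EuclideanSpace.inner_single_right]
  have hsecond : ∀ i : Fin n,
      fderiv ℝ (fun y : EuclideanSpace ℝ (Fin n) => 2 * y i) x (EuclideanSpace.single i 1) = 2 :=
    fun i => by
      rw [((PiLp.hasFDerivAt_apply (𝕜 := ℝ) 2 x i).const_mul 2).fderiv]
      simp
  simp only [lap, hpartial, hsecond]
  simp [mul_comm]

theorem IsLocalMin.nonneg_of_hasDerivAt_deriv {h : ℝ → ℝ} {a c : ℝ} (hmin : IsLocalMin h a)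
    (hcont : ContinuousAt h a) (hc : HasDerivAt (deriv h) c a) : 0 ≤ c := by
  -- If `c < 0`, the second derivative test makes `a` a local maximum as well, so `h` is locally
  -- constant and `c = 0`.
  by_contra! hneg
  have hmax : IsLocalMax h a :=
    isLocalMax_of_deriv_deriv_neg (hc.deriv ▸ hneg) hmin.deriv_eq_zero hcont
  have hconst : h =ᶠ[𝓝 a] fun _ => h a :=
    (hmin.and hmax).mono fun t ht => le_antisymm ht.2 ht.1
  have hderiv : deriv h =ᶠ[𝓝 a] fun _ => 0 :=
    hconst.eventuallyEq_nhds.mono fun t ht => by rw [ht.deriv_eq, deriv_const]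
  exact hneg.ne (hc.unique ((hasDerivAt_const a 0).congr_of_eventuallyEq hderiv))

theorem IsLocalMin.lap_nonneg {g : EuclideanSpace ℝ (Fin n) → ℝ} {x : EuclideanSpace ℝ (Fin n)}
    (hmin : IsLocalMin g x) (hg : ContDiffAt ℝ 2 g x) : 0 ≤ lap g x := by
  refine Finset.sum_nonneg fun i _ => ?_
  set e : EuclideanSpace ℝ (Fin n) := EuclideanSpace.single i 1
  set γ : ℝ → EuclideanSpace ℝ (Fin n) := fun t => x + t • e
  have hγ : ∀ t, HasDerivAt γ e t := fun t => by
    simpa [γ] using ((hasDerivAt_id t).smul_const e).const_add x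
  have hγ0 : γ 0 = x := by simp [γ]
  have hnear : ∀ᶠ t in 𝓝 (0 : ℝ), DifferentiableAt ℝ g (γ t) :=
    (hγ 0).continuousAt.eventually (hγ0 ▸
      (hg.eventually (by simp)).mono fun y hy => hy.differentiableAt two_ne_zero)
  have hderiv : deriv (g ∘ γ) =ᶠ[𝓝 0] fun t => fderiv ℝ g (γ t) e :=
    hnear.mono fun t ht => (ht.hasFDerivAt.comp_hasDerivAt t (hγ t)).deriv
  have hpartial : HasFDerivAt (fun y => fderiv ℝ g y e)
      (fderiv ℝ (fun y => fderiv ℝ g y e) x) (γ 0) := hγ0 ▸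
    (((hg.fderiv_right le_rfl).differentiableAt one_ne_zero).clm_apply
      (differentiableAt_const e)).hasFDerivAt
  refine IsLocalMin.nonneg_of_hasDerivAt_deriv (a := 0) ((hγ0 ▸ hmin).comp_continuous ?_) ?_
    ((hpartial.comp_hasDerivAt 0 (hγ 0)).congr_of_eventuallyEq hderiv)
  · exact (hγ0 ▸ hg.continuousAt).comp (hγ 0).continuousAt
  · exact (hγ 0).continuousAt

theorem IsCompact.exists_isMinOn_mem_diff_of_lap_neg {K U : Set (EuclideanSpace ℝ (Fin n))}
    {g : EuclideanSpace ℝ (Fin n) → ℝ} (hK : IsCompact K) (hne : K.Nonempty) (hU : IsOpen U)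
    (hUK : U ⊆ K) (hgK : ContinuousOn g K) (hg : ContDiffOn ℝ 2 g U)
    (hlap : ∀ x ∈ U, lap g x < 0) : ∃ x₀ ∈ K \ U, IsMinOn g K x₀ := by
  obtain ⟨x₀, hx₀K, hmin⟩ := hK.exists_isMinOn hne hgK
  refine ⟨x₀, ⟨hx₀K, fun hx₀U => ?_⟩, hmin⟩
  have hloc : IsLocalMin g x₀ := hmin.isLocalMin (mem_of_superset (hU.mem_nhds hx₀U) hUK)
  exact (hlap x₀ hx₀U).not_ge (hloc.lap_nonneg (hg.contDiffAt (hU.mem_nhds hx₀U)))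

theorem IsCompact.le_of_forall_mem_diff_le_of_lap_nonpos (hn : 0 < n)
    {K U : Set (EuclideanSpace ℝ (Fin n))} {w : EuclideanSpace ℝ (Fin n) → ℝ} {b : ℝ}
    (hK : IsCompact K) (hU : IsOpen U) (hUK : U ⊆ K) (hwK : ContinuousOn w K)
    (hw : ContDiffOn ℝ 2 w U) (hlap : ∀ x ∈ U, lap w x ≤ 0) (hb : ∀ z ∈ K \ U, b ≤ w z)
    {x : EuclideanSpace ℝ (Fin n)} (hx : x ∈ K) : b ≤ w x := by
  obtain ⟨r, hr⟩ := hK.isBounded.subset_closedBall 0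
  have hnorm : ∀ y ∈ K, ‖y‖ ^ 2 ≤ r ^ 2 := fun y hy => by
    have := mem_closedBall_zero_iff.1 (hr hy)
    exact pow_le_pow_left₀ (norm_nonneg y) this 2
  refine le_of_forall_pos_le_add fun δ hδ => ?_
  set ε := δ / (r ^ 2 + 1)
  have hε : 0 < ε := by positivity
  set g := fun y => w y - ε * ‖y‖ ^ 2
  have hg : ContDiffOn ℝ 2 g U := hw.sub (contDiffOn_const.mul (contDiff_norm_sq ℝ).contDiffOn)
  have hglap : ∀ y ∈ U, lap g y < 0 := fun y hy => by
    rw [lap_sub_const_mul (hw.contDiffAt (hU.mem_nhds hy)) (contDiff_norm_sq ℝ).contDiffAt,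
      lap_norm_sq]
    have : (0 : ℝ) < n := by exact_mod_cast hn
    nlinarith [hlap y hy]
  have hgK : ContinuousOn g K := hwK.sub (by fun_prop)
  obtain ⟨z, ⟨hzK, hzU⟩, hmin⟩ := hK.exists_isMinOn_mem_diff_of_lap_neg ⟨x, hx⟩ hU hUK hgK hg hglap
  have hεr : ε * r ^ 2 ≤ δ := by
    rw [div_mul_eq_mul_div, div_le_iff₀ (by positivity)]
    nlinarith
  have hgzx : g z ≤ g x := hmin hx
  simp only [g] at hgzx
  nlinarith [hb z ⟨hzK, hzU⟩, hnorm z hzK, norm_nonneg x, mul_nonneg hε.le (sq_nonneg ‖x‖)]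

-- `x ν / ‖x‖ ^ n`, written through `‖x‖²` so that its smoothness away from `0` is visible.
noncomputable def dipole (ν : Fin n) (x : EuclideanSpace ℝ (Fin n)) : ℝ :=
  x ν * (‖x‖ ^ 2) ^ (-(n : ℝ) / 2)

theorem dipole_eq_div (ν : Fin n) (x : EuclideanSpace ℝ (Fin n)) :
    dipole ν x = x ν / ‖x‖ ^ n := by
  rw [dipole, ← Real.rpow_natCast, ← Real.rpow_mul (norm_nonneg x),
    show ((2 : ℕ) : ℝ) * (-(n : ℝ) / 2) = -n by push_cast; ring, Real.rpow_neg (norm_nonneg x),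
    Real.rpow_natCast, div_eq_mul_inv]

theorem dipole_le_inv_pow (ν : Fin n) (x : EuclideanSpace ℝ (Fin n)) :
    dipole ν x ≤ (‖x‖ ^ (n - 1))⁻¹ := by
  rcases eq_or_ne x 0 with rfl | hx
  · simp [dipole]
  have hcoord : x ν ≤ ‖x‖ := (le_abs_self _).trans (PiLp.norm_apply_le x ν)
  have hpow : ‖x‖ ^ n = ‖x‖ ^ (n - 1) * ‖x‖ := by
    rw [← pow_succ, Nat.sub_add_cancel ν.pos]
  rw [dipole_eq_div, hpow, div_le_iff₀ (by positivity)]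
  field_simp
  exact hcoord

theorem contDiffAt_dipole (ν : Fin n) {x : EuclideanSpace ℝ (Fin n)} (hx : x ≠ 0) {k : WithTop ℕ∞} :
    ContDiffAt ℝ k (dipole ν) x :=
  (EuclideanSpace.proj ν : EuclideanSpace ℝ (Fin n) →L[ℝ] ℝ).contDiff.contDiffAt.mul
    ((contDiff_norm_sq ℝ).contDiffAt.rpow_const_of_ne (by positivity))

theorem hasFDerivAt_rpow_norm_sq (q : ℝ) {y : EuclideanSpace ℝ (Fin n)} (hy : y ≠ 0) :
    HasFDerivAt (fun y : EuclideanSpace ℝ (Fin n) => (‖y‖ ^ 2) ^ q)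
      ((2 * q * (‖y‖ ^ 2) ^ (q - 1)) • innerSL ℝ y) y := by
  refine ((hasStrictFDerivAt_norm_sq y).hasFDerivAt.rpow_const (p := q)
    (Or.inl (by positivity))).congr_fderiv ?_
  ext z
  simp only [smul_apply, coe_innerSL_apply, nsmul_eq_mul, Nat.cast_ofNat, smul_eq_mul]
  ring

theorem fderiv_dipole_single (ν i : Fin n) {y : EuclideanSpace ℝ (Fin n)} (hy : y ≠ 0) :
    fderiv ℝ (dipole ν) y (EuclideanSpace.single i 1)
      = (if ν = i then 1 else 0) * (‖y‖ ^ 2) ^ (-(n : ℝ) / 2)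
        - n * (y ν * y i) * (‖y‖ ^ 2) ^ (-(n : ℝ) / 2 - 1) := by
  have h : HasFDerivAt (dipole ν) _ y := (PiLp.hasFDerivAt_apply (𝕜 := ℝ) 2 y ν).fun_mul
    (hasFDerivAt_rpow_norm_sq (-(n : ℝ) / 2) hy)
  rw [h.fderiv]
  simp only [add_apply, smul_apply, coe_innerSL_apply, EuclideanSpace.inner_single_right,
    Real.ringHom_apply, one_mul, smul_eq_mul, PiLp.proj_apply, PiLp.single_apply, mul_ite, mul_one,
    mul_zero, ite_mul, zero_mul]
  ring

theorem lap_dipole (ν : Fin n) {x : EuclideanSpace ℝ (Fin n)} (hx : x ≠ 0) :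
    lap (dipole ν) x = 0 := by
  have hs : ‖x‖ ^ 2 ≠ 0 := by positivity
  have hpartial : ∀ i, (fun y => fderiv ℝ (dipole ν) y (EuclideanSpace.single i 1)) =ᶠ[𝓝 x]
      fun y => (if ν = i then 1 else 0) * (‖y‖ ^ 2) ^ (-(n : ℝ) / 2)
        - n * (y ν * y i) * (‖y‖ ^ 2) ^ (-(n : ℝ) / 2 - 1) :=
    fun i => (eventually_ne_nhds hx).mono fun y hy => fderiv_dipole_single ν i hy
  have hsecond : ∀ i, fderiv ℝ (fun y => fderiv ℝ (dipole ν) y (EuclideanSpace.single i 1)) x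
      (EuclideanSpace.single i 1) = (‖x‖ ^ 2) ^ (-(n : ℝ) / 2 - 1) *
        (n * x ν * ((n + 2) * x i ^ 2 / ‖x‖ ^ 2 - 1) - if ν = i then 2 * n * x i else 0) := by
    intro i
    have hcoord := fun j => PiLp.hasFDerivAt_apply (𝕜 := ℝ) 2 x j
    rw [(hpartial i).fderiv_eq, (((hasFDerivAt_rpow_norm_sq _ hx).const_mul _).fun_sub
      ((((hcoord ν).fun_mul (hcoord i)).const_mul _).fun_mul
        (hasFDerivAt_rpow_norm_sq _ hx))).fderiv]
    split_ifs with hνi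
    · subst hνi
      simp only [Real.rpow_sub_one hs, one_smul, smul_add, sub_apply, smul_apply,
        coe_innerSL_apply, EuclideanSpace.inner_single_right, Real.ringHom_apply, one_mul,
        smul_eq_mul, add_apply, PiLp.proj_apply, PiLp.single_eq_same, mul_one]
      field_simp
      ring
    · simp only [Real.rpow_sub_one hs, zero_smul, smul_add, zero_sub, neg_add_rev, add_apply,
        neg_apply, smul_apply, PiLp.proj_apply, ne_eq, hνi, not_false_eq_true,
        PiLp.single_eq_of_ne, smul_eq_mul, mul_zero, neg_zero, PiLp.single_eq_same, mul_one,
        zero_add, coe_innerSL_apply, EuclideanSpace.inner_single_right, Real.ringHom_apply,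
        one_mul, sub_zero]
      field_simp
      ring
  have hsum : ∑ i, x i ^ 2 = ‖x‖ ^ 2 := by simp [EuclideanSpace.norm_sq_eq]
  simp only [lap, hsecond, ← Finset.mul_sum, Finset.sum_sub_distrib, Finset.sum_ite_eq,
    Finset.mem_univ, if_true, ← Finset.sum_div, Finset.sum_const]
  rw [hsum, Finset.card_univ, Fintype.card_fin]
  field_simp
  ring

theorem subset_closure_exterior (ν : Fin n) (R : ℝ) :
    {x : EuclideanSpace ℝ (Fin n) | 0 ≤ x ν ∧ R ≤ ‖x‖} ⊆ closure {x | 0 < x ν ∧ R < ‖x‖} := by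
  rintro y ⟨hyν, hyR⟩
  set e : EuclideanSpace ℝ (Fin n) := EuclideanSpace.single ν 1
  have hlim : Tendsto (fun t : ℝ => y + t • e) (𝓝[>] 0) (𝓝 y) := by
    have : Continuous fun t : ℝ => y + t • e := by fun_prop
    simpa using this.continuousAt.tendsto.mono_left (nhdsWithin_le_nhds (a := 0))
  refine mem_closure_of_tendsto hlim (eventually_nhdsWithin_of_forall fun t (ht : 0 < t) => ?_)
  have hnorm : ‖y‖ ^ 2 < ‖y + t • e‖ ^ 2 := by
    rw [norm_add_sq_real, real_inner_smul_right, EuclideanSpace.inner_single_right, norm_smul]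
    simp only [e, PiLp.norm_single, norm_one, mul_one, Real.norm_eq_abs, abs_of_pos ht, one_mul,
      conj_trivial]
    nlinarith
  have hcoord : 0 < (y + t • e) ν := by
    simp only [e, PiLp.add_apply, PiLp.smul_apply, PiLp.single_eq_same, smul_eq_mul, mul_one]
    linarith
  exact ⟨hcoord, hyR.trans_lt (lt_of_pow_lt_pow_left₀ 2 (norm_nonneg _) hnorm)⟩

section Comparison

variable {ν : Fin n} {R c ρ : ℝ} {u : EuclideanSpace ℝ (Fin n) → ℝ}

def halfShell (ν : Fin n) (R ρ : ℝ) : Set (EuclideanSpace ℝ (Fin n)) :=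
  {y | 0 ≤ y ν ∧ R ≤ ‖y‖ ∧ ‖y‖ ≤ ρ}

def openHalfShell (ν : Fin n) (R ρ : ℝ) : Set (EuclideanSpace ℝ (Fin n)) :=
  {y | 0 < y ν ∧ R < ‖y‖ ∧ ‖y‖ < ρ}

theorem isCompact_halfShell : IsCompact (halfShell ν R ρ) :=
  Metric.isCompact_of_isClosed_isBounded
    ((isClosed_le continuous_const (EuclideanSpace.proj (𝕜 := ℝ) ν).continuous).inter
      ((isClosed_le continuous_const continuous_norm).inter
        (isClosed_le continuous_norm continuous_const)))
    ((Metric.isBounded_closedBall (x := 0) (r := ρ)).subset fun y hy => by simpa using hy.2.2)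

theorem isOpen_openHalfShell : IsOpen (openHalfShell ν R ρ) :=
  (isOpen_lt continuous_const (EuclideanSpace.proj (𝕜 := ℝ) ν).continuous).inter
    ((isOpen_lt continuous_const continuous_norm).inter
      (isOpen_lt continuous_norm continuous_const))

theorem openHalfShell_subset_halfShell : openHalfShell ν R ρ ⊆ halfShell ν R ρ :=
  fun _ hy => ⟨hy.1.le, hy.2.1.le, hy.2.2.le⟩

theorem le_sub_mul_dipole_of_mem_halfShell_diff (hR : 0 < R) (hc : 0 ≤ c) (hρ : 0 < ρ)
    (hnonneg : ∀ x, 0 ≤ x ν → R ≤ ‖x‖ → 0 ≤ u x)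
    (hsphere : ∀ y, ‖y‖ = R → 0 < y ν → c * y ν ≤ u y)
    {z : EuclideanSpace ℝ (Fin n)} (hz : z ∈ halfShell ν R ρ \ openHalfShell ν R ρ) :
    -(c * R ^ n * (ρ ^ (n - 1))⁻¹) ≤ u z - c * R ^ n * dipole ν z := by
  obtain ⟨⟨hzν, hzR, hzρ⟩, hzU⟩ := hz
  have hcR : 0 ≤ c * R ^ n := by positivity
  have htail : 0 ≤ c * R ^ n * (ρ ^ (n - 1))⁻¹ := by positivity
  have huz := hnonneg z hzν hzR
  rcases hzν.eq_or_lt with hzν | hzν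
  · rw [dipole_eq_div, ← hzν]
    simp only [zero_div, mul_zero, sub_zero]
    linarith
  rcases hzR.eq_or_lt with hzR | hzR
  · have hRn : R ^ n ≠ 0 := by positivity
    have hcancel : c * R ^ n * (z ν / R ^ n) = c * z ν := by field_simp
    rw [dipole_eq_div, ← hzR, hcancel]
    linarith [hsphere z hzR.symm hzν]
  · have hzρ : ‖z‖ = ρ := hzρ.eq_of_not_lt fun h => hzU ⟨hzν, hzR, h⟩
    have := mul_le_mul_of_nonneg_left (dipole_le_inv_pow ν z) hcR
    rw [hzρ] at this
    linarith

theorem le_sub_mul_dipole_of_mem_halfShell (hn : 0 < n) (hR : 0 < R) (hc : 0 ≤ c) (hρ : 0 < ρ)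
    (hcont : ContinuousOn u {x | 0 ≤ x ν ∧ R ≤ ‖x‖})
    (hu : ContDiffOn ℝ 2 u {x | 0 < x ν ∧ R < ‖x‖})
    (hsuper : ∀ x ∈ {x | 0 < x ν ∧ R < ‖x‖}, lap u x ≤ 0)
    (hnonneg : ∀ x, 0 ≤ x ν → R ≤ ‖x‖ → 0 ≤ u x)
    (hsphere : ∀ y, ‖y‖ = R → 0 < y ν → c * y ν ≤ u y)
    {x : EuclideanSpace ℝ (Fin n)} (hx : x ∈ halfShell ν R ρ) :
    -(c * R ^ n * (ρ ^ (n - 1))⁻¹) ≤ u x - c * R ^ n * dipole ν x := by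
  have hne : ∀ y : EuclideanSpace ℝ (Fin n), R ≤ ‖y‖ → y ≠ 0 := fun y hy =>
    norm_pos_iff.1 (hR.trans_le hy)
  have hu' : ContDiffOn ℝ 2 u (openHalfShell ν R ρ) := hu.mono fun y hy => ⟨hy.1, hy.2.1⟩
  refine isCompact_halfShell.le_of_forall_mem_diff_le_of_lap_nonpos (w := fun y => u y - c * R ^ n * dipole ν y) hn
    isOpen_openHalfShell openHalfShell_subset_halfShell ?_ ?_ ?_
    (fun z hz => le_sub_mul_dipole_of_mem_halfShell_diff hR hc hρ hnonneg hsphere hz) hx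
  · exact (hcont.mono fun y hy => ⟨hy.1, hy.2.1⟩).sub (continuousOn_const.mul fun y hy =>
      (contDiffAt_dipole ν (hne y hy.2.1) (k := 0)).continuousAt.continuousWithinAt)
  · exact hu'.sub (contDiffOn_const.mul fun y hy =>
      (contDiffAt_dipole ν (hne y hy.2.1.le)).contDiffWithinAt)
  · intro y hy
    rw [lap_sub_const_mul (hu'.contDiffAt (isOpen_openHalfShell.mem_nhds hy))
      (contDiffAt_dipole ν (hne y hy.2.1.le)), lap_dipole ν (hne y hy.2.1.le), mul_zero, sub_zero]
    exact hsuper y ⟨hy.1, hy.2.1⟩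

theorem mul_dipole_le_of_superharmonic (hn : 2 ≤ n) (hR : 0 < R) (hc : 0 ≤ c)
    (hcont : ContinuousOn u {x | 0 ≤ x ν ∧ R ≤ ‖x‖})
    (hu : ContDiffOn ℝ 2 u {x | 0 < x ν ∧ R < ‖x‖})
    (hsuper : ∀ x ∈ {x | 0 < x ν ∧ R < ‖x‖}, lap u x ≤ 0)
    (hnonneg : ∀ x, 0 ≤ x ν → R ≤ ‖x‖ → 0 ≤ u x)
    (hsphere : ∀ y, ‖y‖ = R → 0 < y ν → c * y ν ≤ u y)
    {x : EuclideanSpace ℝ (Fin n)} (hxν : 0 ≤ x ν) (hxR : R ≤ ‖x‖) :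
    c * R ^ n * dipole ν x ≤ u x := by
  have hlim : Tendsto (fun ρ : ℝ => -(c * R ^ n * (ρ ^ (n - 1))⁻¹)) atTop (𝓝 0) := by
    simpa using ((tendsto_pow_atTop (by omega : n - 1 ≠ 0)).inv_tendsto_atTop.const_mul
      (c * R ^ n)).neg
  have hbound : ∀ᶠ ρ in atTop, -(c * R ^ n * (ρ ^ (n - 1))⁻¹) ≤ u x - c * R ^ n * dipole ν x :=
    (eventually_gt_atTop ‖x‖).mono fun ρ hρ =>
      le_sub_mul_dipole_of_mem_halfShell (by omega) hR hc ((hR.trans_le hxR).trans hρ) hcont hu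
        hsuper hnonneg hsphere ⟨hxν, hxR, hρ.le⟩
  linarith [le_of_tendsto hlim hbound]

end Comparison

/-- Exterior comparison (Lemma 2.4): a nonnegative superharmonic function on the exterior
half-space region, vanishing on the boundary hyperplane outside `B_R`, is bounded below
by `m·Rⁿ·xₙ/|x|ⁿ` where `m = inf { u(y)/yₙ : y ∈ ∂B_R, yₙ > 0 }`. -/
theorem stmt7 (hn : 3 ≤ n) (R : ℝ) (hR : 0 < R)
    (u : EuclideanSpace ℝ (Fin n) → ℝ) (m : ℝ)
    (E : Set (EuclideanSpace ℝ (Fin n)))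
    (hE : E = {x | 0 < x ⟨n - 1, by omega⟩ ∧ R < ‖x‖})
    (hcont : ContinuousOn u (closure E))
    (hu2 : ContDiffOn ℝ 2 u E)
    (hsuper : ∀ x ∈ E, lap u x ≤ 0)
    (hnonneg : ∀ x ∈ closure E, 0 ≤ u x)
    (hm : IsGLB {r : ℝ | ∃ y : EuclideanSpace ℝ (Fin n),
      ‖y‖ = R ∧ 0 < y ⟨n - 1, by omega⟩ ∧ r = u y / y ⟨n - 1, by omega⟩} m) :
    ∀ x : EuclideanSpace ℝ (Fin n), 0 < x ⟨n - 1, by omega⟩ → R ≤ ‖x‖ →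
      m * R ^ n * x ⟨n - 1, by omega⟩ / ‖x‖ ^ n ≤ u x := by
  subst hE
  set ν : Fin n := ⟨n - 1, by omega⟩
  have hclosure := subset_closure_exterior ν R
  have hm0 : 0 ≤ m := hm.2 fun r ⟨y, hyR, hyν, hr⟩ =>
    hr ▸ div_nonneg (hnonneg y (hclosure ⟨hyν.le, hyR.ge⟩)) hyν.le
  intro x hxν hxR
  rw [mul_div_assoc, ← dipole_eq_div]
  exact mul_dipole_le_of_superharmonic (ν := ν) (by omega) hR hm0 (hcont.mono hclosure) hu2 hsuper
    (fun y hyν hyR => hnonneg y (hclosure ⟨hyν, hyR⟩))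
    (fun y hyR hyν => (le_div_iff₀ hyν).1 (hm.1 ⟨y, hyR, hyν, rfl⟩)) hxν.le hxR
end
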